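/- For every real number x with 0 ≤ x < 1, the series ∑_{D=1}^{∞} (D^{D+2}/D!)·(x·e^{−x})^D converges and its sum equals (x + 2x^2)/(1−x)^5. -/

import Mathlib

/-!
Write `z = x e^{-x}`. For `x` near `0`, expanding `e^{-n x}` turns
`∑ₙ n^{n+2}/n! · xⁿ e^{-n x}` into an absolutely convergent double series; summing it along
the antidiagonals `n + j = N` gives the coefficient
`(1/N!) ∑ₖ (-1)^{N-k} C(N,k) k^{N+2} = Δ^N[k^{N+2}](0) / N!`, which is the Stirling number
`S(N+2, N) = C(N+2,3) + 3 C(N+2,4)`, and `∑_N S(N+2, N) x^N = (x + 2x²)/(1-x)⁵`.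
On `[0, 1)` we have `0 ≤ z < 1/e`, inside the disc of convergence of `∑ n^{n+2}/n! zⁿ`,
so both sides are real analytic there and the identity extends from a neighbourhood of `0`
to all of `[0, 1)`.
-/

open Finset Real
open scoped Nat fwdDiff Topology

theorem fwdDiff_iter_apply_add {M G : Type*} [AddCommMonoid M] [AddCommGroup G] (h : M)
    (f : M → G) (k : ℕ) (y : M) :
    Δ_[h] ^[k] f (y + h) = Δ_[h] ^[k] f y + Δ_[h] ^[k + 1] f y := by
  rw [Function.iterate_succ_apply', fwdDiff]
  abel

section CommRing

variable {R : Type*} [CommRing R]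

theorem fwdDiff_iter_succ_pow_succ_apply_zero (n k : ℕ) :
    Δ_[1] ^[k + 1] (fun r : R ↦ r ^ (n + 1)) 0 =
      (k + 1) * Δ_[1] ^[k] (fun r : R ↦ r ^ n) 1 := by
  rw [fwdDiff_iter_eq_sum_shift, fwdDiff_iter_eq_sum_shift, sum_range_succ', mul_sum]
  simp only [zero_add, nsmul_eq_mul, mul_one, zsmul_eq_mul]
  refine (add_eq_left.mpr (by simp)).trans (sum_congr rfl fun i _ ↦ ?_)
  have hchoose : ((k + 1).choose (i + 1) : R) * (i + 1) = (k + 1) * k.choose i := by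
    exact_mod_cast congrArg (Nat.cast : ℕ → R) (Nat.add_one_mul_choose_eq k i).symm
  rw [show k + 1 - (i + 1) = k - i by omega, add_comm (1 : R), pow_succ]
  push_cast
  linear_combination ((-1 : R) ^ (k - i) * ((i : R) + 1) ^ n) * hchoose

theorem fwdDiff_iter_pow_apply_zero (n k : ℕ) :
    Δ_[1] ^[k] (fun r : R ↦ r ^ n) 0 = k ! * Nat.stirlingSecond n k := by
  induction n generalizing k with
  | zero =>
    cases k with
    | zero => simp
    | succ k =>
      simp only [pow_zero, Function.iterate_succ_apply, fwdDiff_const]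
      simp [fwdDiff_iter_eq_sum_shift]
  | succ n ih =>
    cases k with
    | zero => simp
    | succ k =>
      have hshift := fwdDiff_iter_apply_add (1 : R) (fun r : R ↦ r ^ n) k 0
      rw [zero_add] at hshift
      rw [fwdDiff_iter_succ_pow_succ_apply_zero, hshift, ih, ih, Nat.stirlingSecond_succ_succ,
        Nat.factorial_succ]
      push_cast
      ring

end CommRing

theorem stirlingSecond_add_two_self (N : ℕ) :
    Nat.stirlingSecond (N + 2) N = (N + 2).choose 3 + 3 * (N + 2).choose 4 := by
  induction N with
  | zero => rfl
  | succ N ih =>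
    have h3 := Nat.choose_succ_right_eq (N + 2) 2
    rw [Nat.stirlingSecond_succ_succ, Nat.stirlingSecond_succ_self_left, ih,
      Nat.choose_succ_succ (N + 2) 2, Nat.choose_succ_succ (N + 2) 3]
    simp only [Nat.add_sub_cancel] at h3
    nlinarith [h3]

theorem hasSum_choose_add_mul_pow {𝕜 : Type*} [NormedField 𝕜] (k j : ℕ) {x : 𝕜}
    (hx : ‖x‖ < 1) :
    HasSum (fun N : ℕ ↦ ((N + k).choose (k + j) : 𝕜) * x ^ N)
      (x ^ j / (1 - x) ^ (k + j + 1)) := by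
  have hvanish : ∑ N ∈ range j, ((N + k).choose (k + j) : 𝕜) * x ^ N = 0 :=
    sum_eq_zero fun N hN ↦ by
      rw [Nat.choose_eq_zero_of_lt (by have := mem_range.mp hN; omega), Nat.cast_zero, zero_mul]
  rw [← hasSum_nat_add_iff' j, hvanish, sub_zero, div_eq_mul_one_div]
  refine ((hasSum_choose_mul_geometric_of_norm_lt_one (k + j) hx).mul_left (x ^ j)).congr_fun
    fun N ↦ ?_
  rw [show N + j + k = N + (k + j) by ring, pow_add]
  ring

theorem hasSum_stirlingSecond_add_two_self_mul_pow {x : ℝ} (hx : |x| < 1) :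
    HasSum (fun N : ℕ ↦ (Nat.stirlingSecond (N + 2) N : ℝ) * x ^ N)
      ((x + 2 * x ^ 2) / (1 - x) ^ 5) := by
  have hx' : ‖x‖ < 1 := hx
  have h1x : (1 : ℝ) - x ≠ 0 := by rw [sub_ne_zero]; rintro rfl; simp at hx
  have hsum := (hasSum_choose_add_mul_pow 2 1 hx').add
    ((hasSum_choose_add_mul_pow 2 2 hx').mul_left 3)
  rw [show x ^ 1 / (1 - x) ^ (2 + 1 + 1) + 3 * (x ^ 2 / (1 - x) ^ (2 + 2 + 1))
      = (x + 2 * x ^ 2) / (1 - x) ^ 5 by field_simp; ring] at hsum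
  refine hsum.congr_fun fun N ↦ ?_
  rw [stirlingSecond_add_two_self]
  push_cast
  ring

theorem HasSum.sum_antidiagonal {α A : Type*} [AddCommMonoid α] [TopologicalSpace α]
    [ContinuousAdd α] [RegularSpace α] [AddCommMonoid A] [HasAntidiagonal A]
    {f : A × A → α} {a : α} (hf : HasSum f a) :
    HasSum (fun n ↦ ∑ p ∈ antidiagonal n, f p) a :=
  (HasAntidiagonal.sigmaAntidiagonalEquivProd.hasSum_iff.mpr hf).sigma fun n ↦
    (antidiagonal n).sum_coe_sort f ▸ hasSum_fintype _

theorem summable_pow_add_div_factorial_mul_pow (m : ℕ) {r : ℝ} (hr : exp 1 * |r| < 1) :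
    Summable fun n : ℕ ↦ (n : ℝ) ^ (n + m) / n ! * r ^ n := by
  have hr' : ‖exp 1 * |r|‖ < 1 := by rwa [Real.norm_eq_abs, abs_of_nonneg (by positivity)]
  refine (summable_pow_mul_geometric_of_norm_lt_one m hr').of_norm_bounded fun n ↦ ?_
  have hexp : (n : ℝ) ^ n / n ! ≤ exp 1 ^ n := by
    rw [← Real.exp_nat_mul, mul_one]
    exact Real.pow_div_factorial_le_exp n n.cast_nonneg n
  rw [Real.norm_eq_abs, abs_mul, abs_pow, abs_of_nonneg (by positivity)]
  calc (n : ℝ) ^ (n + m) / n ! * |r| ^ n = n ^ m * ((n : ℝ) ^ n / n !) * |r| ^ n := by ring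
    _ ≤ n ^ m * exp 1 ^ n * |r| ^ n := by gcongr
    _ = n ^ m * (exp 1 * |r|) ^ n := by ring

/-- The terms of `∑ n, n ^ (n + m) / n! * x ^ n * e ^ (n * y)` after expanding `e ^ (n * y)`. -/
noncomputable def expandedTerm (m : ℕ) (x y : ℝ) (p : ℕ × ℕ) : ℝ :=
  (p.1 : ℝ) ^ (p.1 + m) / p.1 ! * x ^ p.1 * (p.1 * y) ^ p.2 / p.2 !

theorem hasSum_expandedTerm_row (m : ℕ) (x y : ℝ) (n : ℕ) :
    HasSum (fun j ↦ expandedTerm m x y (n, j)) ((n : ℝ) ^ (n + m) / n ! * (x * exp y) ^ n) := by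
  have hexp := (Real.exp_eq_exp_ℝ ▸ NormedSpace.expSeries_div_hasSum_exp (n * y)).mul_left
    ((n : ℝ) ^ (n + m) / n ! * x ^ n)
  rw [mul_pow, ← Real.exp_nat_mul, ← mul_assoc]
  exact hexp.congr_fun fun j ↦ by simp only [expandedTerm]; ring

theorem abs_expandedTerm (m : ℕ) (x y : ℝ) (p : ℕ × ℕ) :
    |expandedTerm m x y p| = expandedTerm m |x| |y| p := by
  simp only [expandedTerm, abs_div, abs_mul, abs_pow, Nat.abs_cast]

theorem sum_antidiagonal_expandedTerm (m N : ℕ) (x : ℝ) :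
    ∑ p ∈ antidiagonal N, expandedTerm m x (-x) p = Nat.stirlingSecond (N + m) N * x ^ N := by
  have hstirling := fwdDiff_iter_pow_apply_zero (R := ℝ) (N + m) N
  rw [fwdDiff_iter_eq_sum_shift] at hstirling
  have hterm : ∀ k ∈ range (N + 1), expandedTerm m x (-x) (k, N - k) =
      x ^ N / N ! * (((-1 : ℤ) ^ (N - k) * N.choose k) • ((0 : ℝ) + k • 1) ^ (N + m)) := by
    intro k hk
    obtain ⟨j, rfl⟩ := Nat.exists_eq_add_of_le (Nat.lt_succ_iff.mp (mem_range.mp hk))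
    simp only [expandedTerm, Nat.add_sub_cancel_left, zsmul_eq_mul, nsmul_eq_mul]
    push_cast
    rw [Nat.cast_add_choose]
    field_simp
    ring
  rw [Nat.sum_antidiagonal_eq_sum_range_succ_mk, sum_congr rfl hterm, ← mul_sum, hstirling]
  field_simp

theorem hasSum_pow_add_div_factorial_mul_of_hasSum_stirlingSecond (m : ℕ) {x s : ℝ}
    (hx : exp 1 * (|x| * exp |x|) < 1)
    (hs : HasSum (fun N : ℕ ↦ (Nat.stirlingSecond (N + m) N : ℝ) * x ^ N) s) :
    HasSum (fun n : ℕ ↦ (n : ℝ) ^ (n + m) / n ! * (x * exp (-x)) ^ n) s := by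
  have habs : Summable fun p ↦ |expandedTerm m x (-x) p| := by
    simp_rw [abs_expandedTerm, abs_neg]
    refine (summable_prod_of_nonneg fun p ↦ ?_).mpr
      ⟨fun n ↦ (hasSum_expandedTerm_row m _ _ n).summable, ?_⟩
    · simp only [expandedTerm, Pi.zero_apply]
      positivity
    simp_rw [(hasSum_expandedTerm_row m _ _ _).tsum_eq]
    exact summable_pow_add_div_factorial_mul_pow m (by rwa [abs_of_nonneg (by positivity)])
  have htotal := habs.of_abs.hasSum
  have hdiag := htotal.sum_antidiagonal
  simp_rw [sum_antidiagonal_expandedTerm] at hdiag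
  rw [hs.unique hdiag]
  exact htotal.prod_fiberwise (hasSum_expandedTerm_row m x (-x))

theorem exp_one_mul_mul_exp_neg_lt_one {x : ℝ} (hx : x ≠ 1) : exp 1 * (x * exp (-x)) < 1 := by
  have h := add_one_lt_exp (sub_ne_zero.mpr hx)
  calc exp 1 * (x * exp (-x)) < exp 1 * (exp (x - 1) * exp (-x)) := by gcongr; linarith
    _ = 1 := by rw [← exp_add, ← exp_add]; ring_nf; exact exp_zero

open FormalMultilinearSeries in
theorem analyticAt_tsum_pow_add_div_factorial_mul_pow (m : ℕ) {z : ℝ} (hz : exp 1 * |z| < 1) :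
    AnalyticAt ℝ (fun w : ℝ ↦ ∑' n : ℕ, (n : ℝ) ^ (n + m) / n ! * w ^ n) z := by
  set p := ofScalars ℝ (fun n : ℕ ↦ (n : ℝ) ^ (n + m) / n !)
  have hp : (fun w : ℝ ↦ ∑' n : ℕ, (n : ℝ) ^ (n + m) / n ! * w ^ n) = p.sum := by
    simp only [p, ← ofScalarsSum.eq_1, ofScalarsSum_eq_tsum, smul_eq_mul]
  obtain ⟨r, hzr, hr⟩ := exists_between ((lt_div_iff₀' (exp_pos 1)).mpr hz)
  have hr0 : 0 ≤ r := (abs_nonneg z).trans hzr.le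
  have hsum : Summable fun n ↦ ‖p n‖ * (r.toNNReal : ℝ) ^ n := by
    simp only [p, ofScalars_norm, Real.norm_eq_abs, Real.coe_toNNReal r hr0]
    refine (summable_pow_add_div_factorial_mul_pow m (r := r) ?_).congr fun n ↦ ?_
    · rwa [abs_of_nonneg hr0, ← lt_div_iff₀' (exp_pos 1)]
    · rw [abs_of_nonneg (by positivity)]
  have hrad : ENNReal.ofReal r ≤ p.radius := p.le_radius_of_summable_norm hsum
  have hmem : z ∈ Metric.eball (0 : ℝ) p.radius := by
    rw [Metric.mem_eball, edist_dist, dist_zero_right, Real.norm_eq_abs]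
    exact ((ENNReal.ofReal_lt_ofReal_iff_of_nonneg (abs_nonneg z)).mpr hzr).trans_le hrad
  rw [hp]
  exact (p.hasFPowerSeriesOnBall (pos_of_gt hmem)).analyticAt_of_mem hmem

theorem tsum_pow_add_two_div_factorial_mul_exp_eventuallyEq :
    (fun t : ℝ ↦ ∑' n : ℕ, (n : ℝ) ^ (n + 2) / n ! * (t * exp (-t)) ^ n)
      =ᶠ[𝓝 0] fun t ↦ (t + 2 * t ^ 2) / (1 - t) ^ 5 := by
  have hnear : ∀ᶠ t in 𝓝 (0 : ℝ), exp 1 * (|t| * exp |t|) < 1 ∧ |t| < 1 :=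
    (ContinuousAt.eventually_lt (by fun_prop) continuousAt_const (by simp)).and
      (ContinuousAt.eventually_lt (by fun_prop) continuousAt_const (by simp))
  filter_upwards [hnear] with t ⟨ht, ht1⟩
  exact (hasSum_pow_add_div_factorial_mul_of_hasSum_stirlingSecond 2 ht
    (hasSum_stirlingSecond_add_two_self_mul_pow ht1)).tsum_eq

theorem hasSum_pow_add_two_div_factorial_mul_exp {x : ℝ} (hx0 : 0 ≤ x) (hx1 : x < 1) :
    HasSum (fun n : ℕ ↦ (n : ℝ) ^ (n + 2) / n ! * (x * exp (-x)) ^ n)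
      ((x + 2 * x ^ 2) / (1 - x) ^ 5) := by
  have hz : ∀ {t : ℝ}, t ∈ Set.Ico (0 : ℝ) 1 → exp 1 * |t * exp (-t)| < 1 := fun ht ↦ by
    rw [abs_of_nonneg (by have := ht.1; positivity)]
    exact exp_one_mul_mul_exp_neg_lt_one ht.2.ne
  have hlhs : AnalyticOnNhd ℝ
      (fun t : ℝ ↦ ∑' n : ℕ, (n : ℝ) ^ (n + 2) / n ! * (t * exp (-t)) ^ n)
      (Set.Ico 0 1) :=
    fun t ht ↦ (analyticAt_tsum_pow_add_div_factorial_mul_pow 2 (hz ht)).fun_comp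
      (f := fun t : ℝ ↦ t * exp (-t)) (by fun_prop)
  have hrhs : AnalyticOnNhd ℝ (fun t : ℝ ↦ (t + 2 * t ^ 2) / (1 - t) ^ 5) (Set.Ico 0 1) :=
    fun t ht ↦ AnalyticAt.div (f := fun t : ℝ ↦ t + 2 * t ^ 2)
      (g := fun t : ℝ ↦ (1 - t) ^ 5) (by fun_prop) (by fun_prop)
      (pow_ne_zero 5 (sub_ne_zero.mpr ht.2.ne'))
  have heq := hlhs.eqOn_of_preconnected_of_eventuallyEq hrhs isPreconnected_Ico
    (Set.left_mem_Ico.mpr one_pos) tsum_pow_add_two_div_factorial_mul_exp_eventuallyEq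
  have hsum := (summable_pow_add_div_factorial_mul_pow 2 (hz ⟨hx0, hx1⟩)).hasSum
  simpa only [heq ⟨hx0, hx1⟩] using hsum

/-- for `0 ≤ x < 1`,
`∑_{D=1}^∞ (D^{D+2}/D!)·(x·e^{−x})^D = (x + 2x²)/(1−x)^5`. -/
theorem stmt10 (x : ℝ) (hx0 : 0 ≤ x) (hx1 : x < 1) :
    HasSum
      (fun n : ℕ =>
        ((n + 1 : ℕ) ^ ((n + 1) + 2) / (n + 1).factorial : ℝ) * (x * Real.exp (-x)) ^ (n + 1))
      ((x + 2 * x ^ 2) / (1 - x) ^ 5) := by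
  have h := hasSum_pow_add_two_div_factorial_mul_exp hx0 hx1
  rw [← hasSum_nat_add_iff' 1] at h
  simpa using h
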